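/- Let Q̃₁, Q̃₂, Q̃₃, Q̃₄ > 0, q̃₁, q̃₂, q̃₃, q̃₄ ∈ ℝ, m_p, ω ∈ ℝ and ℓ ∈ ℕ, and let V be the four-charge effective potential. Then lim_{r→0⁺} r⁴·V(r) = −256·(ω − ω_c)²·Q̃₁Q̃₂Q̃₃Q̃₄, where ω_c = q̃₁+q̃₂+q̃₃+q̃₄; in particular this limit is ≤ 0, and it equals 0 if and only if ω = ω_c. -/
import Mathlib


open Real Filter

/-- The harmonic function `H̃(r) = 1 + 4Q̃/r`. -/
noncomputable def Hq (Q r : ℝ) : ℝ := 1 + 4*Q/r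

/-- The four-charge effective potential of a charged massive scalar in the extremal
four-charge STU black hole background. -/
noncomputable def V4 (Q₁ Q₂ Q₃ Q₄ q₁ q₂ q₃ q₄ mp ω : ℝ) (ℓ : ℕ) (r : ℝ) : ℝ :=
  ω^2 + mp^2 * Real.sqrt (Hq Q₁ r * Hq Q₂ r * Hq Q₃ r * Hq Q₄ r)
    - (ω - (4*q₁*Q₁/(r + 4*Q₁) + 4*q₂*Q₂/(r + 4*Q₂)
            + 4*q₃*Q₃/(r + 4*Q₃) + 4*q₄*Q₄/(r + 4*Q₄)))^2
        * (Hq Q₁ r * Hq Q₂ r * Hq Q₃ r * Hq Q₄ r)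
    + ((ℓ : ℝ)*((ℓ : ℝ) + 1))/r^2

/-- Near the horizon, `r⁴·V(r) → −256(ω−ω_c)²·Q̃₁Q̃₂Q̃₃Q̃₄` as `r → 0⁺`, where
`ω_c = q̃₁+q̃₂+q̃₃+q̃₄`; this limit is `≤ 0`, vanishing iff `ω = ω_c`. -/
theorem stmt_15 (Q₁ Q₂ Q₃ Q₄ q₁ q₂ q₃ q₄ mp ω : ℝ) (ℓ : ℕ)
    (hQ₁ : 0 < Q₁) (hQ₂ : 0 < Q₂) (hQ₃ : 0 < Q₃) (hQ₄ : 0 < Q₄) :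
    Tendsto (fun r : ℝ => r^4 * V4 Q₁ Q₂ Q₃ Q₄ q₁ q₂ q₃ q₄ mp ω ℓ r)
        (nhdsWithin 0 (Set.Ioi 0))
        (nhds (-256 * (ω - (q₁ + q₂ + q₃ + q₄))^2 * (Q₁*Q₂*Q₃*Q₄))) ∧
      -256 * (ω - (q₁ + q₂ + q₃ + q₄))^2 * (Q₁*Q₂*Q₃*Q₄) ≤ 0 ∧
      (-256 * (ω - (q₁ + q₂ + q₃ + q₄))^2 * (Q₁*Q₂*Q₃*Q₄) = 0
        ↔ ω = q₁ + q₂ + q₃ + q₄) := by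
  set g : ℝ → ℝ := fun r =>
    r^4*ω^2 + mp^2 * (r^2 * Real.sqrt ((r+4*Q₁)*(r+4*Q₂)*(r+4*Q₃)*(r+4*Q₄)))
      - (ω - (4*q₁*Q₁/(r + 4*Q₁) + 4*q₂*Q₂/(r + 4*Q₂)
              + 4*q₃*Q₃/(r + 4*Q₃) + 4*q₄*Q₄/(r + 4*Q₄)))^2
          * ((r+4*Q₁)*(r+4*Q₂)*(r+4*Q₃)*(r+4*Q₄))
      + r^2*((ℓ : ℝ)*((ℓ : ℝ) + 1)) with hg
  have hQpos : 0 < Q₁*Q₂*Q₃*Q₄ := by positivity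
  refine ⟨?_, by nlinarith [sq_nonneg (ω - (q₁+q₂+q₃+q₄))], ?_⟩
  · have hd : ∀ Q c : ℝ, 0 < Q → ContinuousAt (fun x : ℝ => c / (x + 4*Q)) 0 := by
      intro Q c hQ
      exact ContinuousAt.div continuousAt_const (by fun_prop)
        (by norm_num [hQ.ne'])
    have hcont : ContinuousAt g 0 := by
      refine ContinuousAt.add (ContinuousAt.sub (by fun_prop) (ContinuousAt.mul ?_ (by fun_prop))) (by fun_prop)
      exact ContinuousAt.pow (ContinuousAt.sub continuousAt_const
        ((((hd Q₁ _ hQ₁).add (hd Q₂ _ hQ₂)).add (hd Q₃ _ hQ₃)).add (hd Q₄ _ hQ₄))) 2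
    have hval : g 0 = -256 * (ω - (q₁ + q₂ + q₃ + q₄))^2 * (Q₁*Q₂*Q₃*Q₄) := by
      simp only [hg]
      have h1 : (4:ℝ)*q₁*Q₁/(0 + 4*Q₁) = q₁ := by field_simp; ring
      have h2 : (4:ℝ)*q₂*Q₂/(0 + 4*Q₂) = q₂ := by field_simp; ring
      have h3 : (4:ℝ)*q₃*Q₃/(0 + 4*Q₃) = q₃ := by field_simp; ring
      have h4 : (4:ℝ)*q₄*Q₄/(0 + 4*Q₄) = q₄ := by field_simp; ring
      rw [h1, h2, h3, h4]
      ring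
    have htend : Tendsto g (nhdsWithin 0 (Set.Ioi 0))
        (nhds (-256 * (ω - (q₁ + q₂ + q₃ + q₄))^2 * (Q₁*Q₂*Q₃*Q₄))) := by
      rw [← hval]
      exact hcont.continuousWithinAt.tendsto
    refine htend.congr' ?_
    filter_upwards [self_mem_nhdsWithin] with r (hr : 0 < r)
    have hr0 : r ≠ 0 := hr.ne'
    have e1 : ∀ Q : ℝ, 0 < Q → Hq Q r = (r + 4*Q)/r := by
      intro Q hQ; unfold Hq; field_simp
    have hP : Hq Q₁ r * Hq Q₂ r * Hq Q₃ r * Hq Q₄ r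
        = ((r+4*Q₁)*(r+4*Q₂)*(r+4*Q₃)*(r+4*Q₄))/r^4 := by
      rw [e1 Q₁ hQ₁, e1 Q₂ hQ₂, e1 Q₃ hQ₃, e1 Q₄ hQ₄]; field_simp
    have hPnn : (0:ℝ) ≤ (r+4*Q₁)*(r+4*Q₂)*(r+4*Q₃)*(r+4*Q₄) := by positivity
    have hsqrt : Real.sqrt (Hq Q₁ r * Hq Q₂ r * Hq Q₃ r * Hq Q₄ r)
        = Real.sqrt ((r+4*Q₁)*(r+4*Q₂)*(r+4*Q₃)*(r+4*Q₄)) / r^2 := by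
      rw [hP, Real.sqrt_div hPnn]
      congr 1
      rw [show r^4 = (r^2)^2 by ring, Real.sqrt_sq (by positivity)]
    have key : ∀ A S P L : ℝ,
        r^4 * (ω^2 + mp^2 * (S/r^2) - A^2 * (P/r^4) + L/r^2)
          = r^4*ω^2 + mp^2*(r^2*S) - A^2*P + r^2*L := by
      intro A S P L
      field_simp
    simp only [hg, V4]
    rw [hsqrt, hP]
    exact (key _ _ _ _).symm
  · constructor
    · intro h
      have : (ω - (q₁ + q₂ + q₃ + q₄))^2 = 0 := by
        by_contra hne
        have h2 : (0:ℝ) < (ω - (q₁+q₂+q₃+q₄))^2 :=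
          lt_of_le_of_ne (sq_nonneg _) (Ne.symm hne)
        nlinarith
      have := pow_eq_zero_iff (n := 2) (by norm_num) |>.mp this
      linarith
    · intro h; rw [h]; ring_nf
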